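/- arXiv:1804.08698 — 2 statements merged into one kernel-verified Lean document; each statement's English description precedes it below -/
import Mathlib

section
/- Let p ≥ 1 and let S be a finite set of n ≥ 1 points in ℝ^p. Then the number of distinct subsets of S of the form {x ∈ S : ⟨a, x⟩ + b ≥ 0}, where a ranges over ℝ^p and b over ℝ, is at most 2·∑_{i=0}^{p} C(n−1, i). -/
open Module Set Filter Topology Finset Matrix

/-! Shifting `b` by a small `δ > 0` makes every value `⟪a, x⟫ + b` on `S` nonzero without changing
the trace, so each trace is read off from a strict sign pattern of the `n` linear functionals
`(a, b) ↦ ⟪a, x⟫ + b` on the `(p + 1)`-dimensional space `ℝ^p × ℝ`, i.e. from a region of a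
central hyperplane arrangement. Dropping one functional `f₀`, a pattern of the others that extends
both ways is realised on both sides of `ker f₀`, hence (by a positive combination of the two
witnesses) inside `ker f₀`. So the number `N(k, d)` of patterns of `k` functionals in dimension `d`
satisfies `N(n + 1, d) ≤ N(n, d) + N(n, d - 1)`, and Pascal's rule turns this recursion into
Cover's bound `2 ∑_{i < d} C(n, i)`. -/

lemma ncard_le_ncard_image_vecTail_add_ncard_inter {n : ℕ} (P : Set (Fin (n + 1) → Bool)) :
    P.ncard ≤ (vecTail '' P).ncard +
      ({t | vecCons false t ∈ P} ∩ {t | vecCons true t ∈ P}).ncard := by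
  set A := {t | vecCons false t ∈ P}
  set B := {t | vecCons true t ∈ P}
  have hP : P ⊆ vecCons false '' A ∪ vecCons true '' B := by
    intro s hs
    rw [← cons_head_tail s] at hs ⊢
    cases h : vecHead s <;> rw [h] at hs
    · exact Or.inl ⟨_, hs, rfl⟩
    · exact Or.inr ⟨_, hs, rfl⟩
  have hAB : A ∪ B ⊆ vecTail '' P := by
    rintro t (ht | ht) <;> exact ⟨_, ht, tail_cons _ _⟩
  calc P.ncard ≤ (vecCons false '' A).ncard + (vecCons true '' B).ncard :=
        (Set.ncard_le_ncard hP).trans (Set.ncard_union_le _ _)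
    _ ≤ A.ncard + B.ncard :=
        add_le_add (Set.ncard_image_le (Set.toFinite _)) (Set.ncard_image_le (Set.toFinite _))
    _ = (A ∪ B).ncard + (A ∩ B).ncard := (Set.ncard_union_add_ncard_inter _ _).symm
    _ ≤ (vecTail '' P).ncard + (A ∩ B).ncard := by
        gcongr; exact Set.toFinite _

lemma Nat.sum_range_succ_choose_succ (n d : ℕ) :
    ∑ i ∈ range (d + 1), (n + 1).choose i =
      ∑ i ∈ range (d + 1), n.choose i + ∑ i ∈ range d, n.choose i := by
  rw [sum_range_succ', sum_range_succ' (fun i => n.choose i) d]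
  simp only [Nat.choose_succ_succ, sum_add_distrib, Nat.choose_zero_right, Nat.succ_eq_add_one]
  omega

lemma add_ne_zero_and_pos_iff_of_pos_iff {a b x y : ℝ} (ha : 0 < a) (hb : 0 < b) (hx : x ≠ 0)
    (hy : y ≠ 0) (hxy : 0 < x ↔ 0 < y) : a * x + b * y ≠ 0 ∧ (0 < a * x + b * y ↔ 0 < x) := by
  rcases hx.lt_or_gt with hx | hx
  · have hy : y < 0 := hy.lt_of_le (not_lt.1 fun h => hx.not_gt (hxy.2 h))
    have : a * x + b * y < 0 := by nlinarith
    exact ⟨this.ne, iff_of_false this.not_gt hx.not_gt⟩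
  · have : 0 < a * x + b * y := by nlinarith [hxy.1 hx]
    exact ⟨this.ne', iff_of_true this hx⟩

lemma exists_pos_forall_add_ne_zero_and_pos_iff {ι : Type*} [Finite ι] (t : ι → ℝ) :
    ∃ δ > 0, ∀ i, t i + δ ≠ 0 ∧ (0 < t i + δ ↔ 0 ≤ t i) := by
  have h : ∀ i, ∀ᶠ δ in 𝓝[>] (0 : ℝ), t i + δ ≠ 0 ∧ (0 < t i + δ ↔ 0 ≤ t i) := by
    intro i
    rcases le_or_gt 0 (t i) with hi | hi
    · filter_upwards [self_mem_nhdsWithin] with δ (hδ : 0 < δ)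
      exact ⟨by positivity, iff_of_true (by positivity) hi⟩
    · filter_upwards [nhdsWithin_le_nhds (eventually_lt_nhds (neg_pos.2 hi))] with δ hδ
      exact ⟨by linarith, iff_of_false (by linarith) hi.not_ge⟩
  obtain ⟨δ, hδ, hδ0⟩ := ((eventually_all.2 h).and self_mem_nhdsWithin).exists
  exact ⟨δ, hδ0, hδ⟩

section SignPatterns

variable {V : Type*} [AddCommGroup V] [Module ℝ V] {k : ℕ}

def signPatterns (f : Fin k → Dual ℝ V) : Set (Fin k → Bool) :=
  (fun w i => decide (0 < f i w)) '' {w | ∀ i, f i w ≠ 0}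

lemma signPatterns_eq_empty_of_eq_zero {f : Fin k → Dual ℝ V} {i : Fin k} (hf : f i = 0) :
    signPatterns f = ∅ :=
  Set.image_eq_empty.2 <| Set.eq_empty_of_forall_notMem fun w hw => hw i (by simp [hf])

lemma image_vecTail_signPatterns_subset (f : Fin (k + 1) → Dual ℝ V) :
    vecTail '' signPatterns f ⊆ signPatterns (vecTail f) := by
  rintro _ ⟨_, ⟨w, hw, rfl⟩, rfl⟩
  exact ⟨w, fun i => hw i.succ, rfl⟩

lemma cons_false_inter_cons_true_subset_signPatterns (f : Fin (k + 1) → Dual ℝ V) :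
    {t | vecCons false t ∈ signPatterns f} ∩ {t | vecCons true t ∈ signPatterns f} ⊆
      signPatterns fun i => (vecTail f i).domRestrict (LinearMap.ker (vecHead f)) := by
  rintro t ⟨⟨w₁, hw₁, ht₁⟩, ⟨w₂, hw₂, ht₂⟩⟩
  have h₁ : f 0 w₁ < 0 := (by simpa using congrFun ht₁ 0 : f 0 w₁ ≤ 0).lt_of_ne (hw₁ 0)
  have h₂ : 0 < f 0 w₂ := by simpa using congrFun ht₂ 0
  have hsame : ∀ i : Fin k, (0 < f i.succ w₁ ↔ 0 < f i.succ w₂) := fun i => by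
    simpa using (congrFun ht₁ i.succ).trans (congrFun ht₂ i.succ).symm
  set w := f 0 w₂ • w₁ + (-f 0 w₁) • w₂
  have hw : w ∈ LinearMap.ker (vecHead f) := by
    simp only [LinearMap.mem_ker, w, map_add, map_smul, smul_eq_mul, vecHead]
    ring
  have key : ∀ i : Fin k, f i.succ w ≠ 0 ∧ (0 < f i.succ w ↔ 0 < f i.succ w₁) := fun i => by
    simpa only [w, map_add, map_smul, smul_eq_mul] using
      add_ne_zero_and_pos_iff_of_pos_iff h₂ (neg_pos.2 h₁) (hw₁ i.succ) (hw₂ i.succ) (hsame i)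
  refine ⟨⟨w, hw⟩, fun i => (key i).1, funext fun i => ?_⟩
  simpa [vecTail, (key i).2] using congrFun ht₁ i.succ

variable [FiniteDimensional ℝ V]

theorem ncard_signPatterns_le (n : ℕ) (f : Fin (n + 1) → Dual ℝ V) :
    (signPatterns f).ncard ≤ 2 * ∑ i ∈ range (finrank ℝ V), n.choose i := by
  induction n generalizing V with
  | zero =>
    by_cases hf : vecHead f = 0
    · simp [signPatterns_eq_empty_of_eq_zero hf]
    have hV : 1 ≤ finrank ℝ V := by
      rw [← Module.Dual.finrank_ker_add_one_of_ne_zero hf]; omega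
    calc (signPatterns f).ncard ≤ Nat.card (Fin 1 → Bool) := Set.ncard_le_card _
      _ = 2 * ∑ i ∈ range 1, (0).choose i := by simp
      _ ≤ _ := by gcongr
  | succ n ih =>
    by_cases hf : vecHead f = 0
    · simp [signPatterns_eq_empty_of_eq_zero hf]
    set K := LinearMap.ker (vecHead f)
    obtain ⟨d, hd⟩ : ∃ d, finrank ℝ K = d := ⟨_, rfl⟩
    have hV : finrank ℝ V = d + 1 := hd ▸ (Module.Dual.finrank_ker_add_one_of_ne_zero hf).symm
    calc (signPatterns f).ncard
        ≤ (vecTail '' signPatterns f).ncard +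
          ({t | vecCons false t ∈ signPatterns f} ∩ {t | vecCons true t ∈ signPatterns f}).ncard :=
          ncard_le_ncard_image_vecTail_add_ncard_inter _
      _ ≤ (signPatterns (vecTail f)).ncard +
          (signPatterns fun i => (vecTail f i).domRestrict K).ncard :=
          add_le_add (Set.ncard_le_ncard (image_vecTail_signPatterns_subset f))
            (Set.ncard_le_ncard (cons_false_inter_cons_true_subset_signPatterns f))
      _ ≤ 2 * ∑ i ∈ range (d + 1), n.choose i + 2 * ∑ i ∈ range d, n.choose i :=
          add_le_add (hV ▸ ih _) (hd ▸ ih _)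
      _ = 2 * ∑ i ∈ range (finrank ℝ V), (n + 1).choose i := by
          rw [hV, Nat.sum_range_succ_choose_succ]; ring

end SignPatterns

section Affine

variable {E : Type*} [NormedAddCommGroup E] [InnerProductSpace ℝ E] {k : ℕ}

def affineDichotomies (x : Fin k → E) : Set (Fin k → Bool) :=
  Set.range fun ab : E × ℝ => fun i => decide (0 ≤ inner ℝ ab.1 (x i) + ab.2)

lemma affineDichotomies_subset_signPatterns (x : Fin k → E) :
    affineDichotomies x ⊆ signPatterns fun i => (innerₗ E (x i)).coprod LinearMap.id := by
  rintro _ ⟨⟨a, b⟩, rfl⟩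
  obtain ⟨δ, -, hδ⟩ := exists_pos_forall_add_ne_zero_and_pos_iff fun i => inner ℝ a (x i) + b
  refine ⟨(a, b + δ), fun i => ?_, funext fun i => ?_⟩
  · simpa [add_assoc, real_inner_comm] using (hδ i).1
  · simpa [add_assoc, real_inner_comm] using (hδ i).2

theorem ncard_affineDichotomies_le [FiniteDimensional ℝ E] (x : Fin k → E) :
    (affineDichotomies x).ncard ≤ 2 * ∑ i ∈ range (finrank ℝ E + 1), (k - 1).choose i := by
  cases k with
  | zero =>
    calc (affineDichotomies x).ncard ≤ Nat.card (Fin 0 → Bool) := Set.ncard_le_card _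
      _ ≤ 2 * ∑ i ∈ range 1, (0 - 1).choose i := by simp
      _ ≤ _ := by gcongr; omega
  | succ n =>
    calc (affineDichotomies x).ncard
        ≤ (signPatterns fun i => (innerₗ E (x i)).coprod LinearMap.id).ncard :=
          Set.ncard_le_ncard (affineDichotomies_subset_signPatterns x)
      _ ≤ _ := (ncard_signPatterns_le n _).trans_eq (by rw [finrank_prod, finrank_self]; rfl)

theorem ncard_halfspaceTraces_le [FiniteDimensional ℝ E] (S : Finset E) :
    {T : Set E | ∃ (a : E) (b : ℝ), T = {x | x ∈ S ∧ 0 ≤ inner ℝ a x + b}}.ncard ≤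
      2 * ∑ i ∈ range (finrank ℝ E + 1), (S.card - 1).choose i := by
  set x : Fin S.card → E := fun i => S.equivFin.symm i
  have hmem : ∀ y, y ∈ S ↔ ∃ i, x i = y := fun y =>
    ⟨fun hy => ⟨S.equivFin ⟨y, hy⟩, by simp [x]⟩, by rintro ⟨i, rfl⟩; exact (S.equivFin.symm i).2⟩
  have htraces : {T : Set E | ∃ (a : E) (b : ℝ), T = {x | x ∈ S ∧ 0 ≤ inner ℝ a x + b}} ⊆
      (fun s => x '' {i | s i}) '' affineDichotomies x := by
    rintro _ ⟨a, b, rfl⟩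
    refine ⟨_, ⟨(a, b), rfl⟩, ?_⟩
    ext y
    simp only [hmem, Set.mem_image, Set.mem_ofPred_eq, decide_eq_true_eq]
    constructor
    · rintro ⟨i, h, rfl⟩
      exact ⟨⟨i, rfl⟩, h⟩
    · rintro ⟨⟨i, rfl⟩, h⟩
      exact ⟨i, h, rfl⟩
  calc _ ≤ ((fun s => x '' {i | s i}) '' affineDichotomies x).ncard :=
        Set.ncard_le_ncard htraces (Set.toFinite _)
    _ ≤ (affineDichotomies x).ncard := Set.ncard_image_le (Set.toFinite _)
    _ ≤ _ := ncard_affineDichotomies_le x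

end Affine

theorem cover_halfspace_trace_bound_general (p n : ℕ)
    (S : Finset (EuclideanSpace ℝ (Fin p))) (hS : S.card = n) :
    Set.ncard {T : Set (EuclideanSpace ℝ (Fin p)) |
        ∃ (a : EuclideanSpace ℝ (Fin p)) (b : ℝ),
          T = {x | x ∈ S ∧ 0 ≤ (inner ℝ a x : ℝ) + b}} ≤
      2 * ∑ i ∈ Finset.range (p + 1), (n - 1).choose i := by
  simpa [finrank_euclideanSpace_fin, hS] using ncard_halfspaceTraces_le S

/-- Cover's function-counting bound: for a finite set `S` of `n ≥ 1` points in `ℝ^p`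
(`p ≥ 1`), the number of distinct halfspace traces `{x ∈ S : ⟨a, x⟩ + b ≥ 0}` is at most
`2 * ∑_{i=0}^{p} C(n-1, i)`. -/
theorem cover_halfspace_trace_bound (p n : ℕ) (hp : 1 ≤ p) (hn : 1 ≤ n)
    (S : Finset (EuclideanSpace ℝ (Fin p))) (hS : S.card = n) :
    Set.ncard {T : Set (EuclideanSpace ℝ (Fin p)) |
        ∃ (a : EuclideanSpace ℝ (Fin p)) (b : ℝ),
          T = {x | x ∈ S ∧ 0 ≤ (inner ℝ a x : ℝ) + b}} ≤
      2 * ∑ i ∈ Finset.range (p + 1), (n - 1).choose i :=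
  cover_halfspace_trace_bound_general p n S hS
end

section
/- Let p ≥ 1 and let S be a finite set of n ≥ 1 points in ℝ^p. Then for every k ≥ 1, the number of distinct subsets of S expressible as S ∩ H₁ ∩ ⋯ ∩ H_k, where each H_j = {x ∈ ℝ^p : ⟨a_j, x⟩ + b_j ≥ 0} is an affine halfspace, is at most (2(n+1)^p)^k. -/
/-!
Call `{x ∈ S | 0 ≤ f x}` the trace of `f` on `S`. If `b ⊆ S` is the trace on `S` both of `f`
with `0 ≤ f s` and of `g` with `g s < 0`, so that `b` gives rise to the two traces `insert s b`
and `b` on `insert s S`, then `b` is also the trace of `-g s • f + f s • g`, which vanishes at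
`s`. So, for a linear space of functions, adding a point raises the number of traces by at most
the number of traces of a subspace of smaller dimension (Cover's recursion). A line of functions
has at most three traces, and induction gives at most `3 (n + 1)^d` traces for a space of
dimension `d + 1`. The affine functions on `ℝ^p` form a space of dimension `p + 1`; one further
step of the recursion bounds their traces by `2 (n + 1)^p` when `p ≥ 2`, and for `p = 1` the
traces are upper or lower sets of `S`, which form two chains. Finally, `S ∩ H₁ ∩ ⋯ ∩ H_k` is
determined by the `k` traces `S ∩ H_j`.
-/

open Finset Module

variable {α : Type*}

open Classical in
noncomputable def traces (W : Set (α → ℝ)) (S : Finset α) : Finset (Finset α) :=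
  {T ∈ S.powerset | ∃ f ∈ W, T = {x ∈ S | 0 ≤ f x}}

section Traces

variable {W : Set (α → ℝ)} {S T : Finset α} {s : α}

theorem mem_traces : T ∈ traces W S ↔ ∃ f ∈ W, T = {x ∈ S | 0 ≤ f x} := by
  classical
  simp only [traces, mem_filter, mem_powerset, and_iff_right_iff_imp]
  rintro ⟨f, -, rfl⟩
  exact filter_subset _ _

theorem filter_mem_traces {f : α → ℝ} (hf : f ∈ W) (S : Finset α) :
    {x ∈ S | 0 ≤ f x} ∈ traces W S :=
  mem_traces.2 ⟨f, hf, rfl⟩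

theorem traces_subset_powerset (W : Set (α → ℝ)) (S : Finset α) : traces W S ⊆ S.powerset := by
  classical
  exact filter_subset _ _

theorem card_traces_empty_le_one (W : Set (α → ℝ)) : #(traces W ∅) ≤ 1 :=
  (card_le_card (traces_subset_powerset W ∅)).trans (by simp)

theorem exists_of_mem_traces_insert [DecidableEq α] (hs : s ∉ S)
    (hT : T ∈ traces W (insert s S)) :
    ∃ f ∈ W, T.erase s = {x ∈ S | 0 ≤ f x} ∧ (s ∈ T ↔ 0 ≤ f s) := by
  obtain ⟨f, hf, rfl⟩ := mem_traces.1 hT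
  refine ⟨f, hf, ?_, by simp⟩
  rw [← filter_erase, erase_insert hs]

theorem erase_mem_traces_of_mem_traces_insert [DecidableEq α] (hs : s ∉ S)
    (hT : T ∈ traces W (insert s S)) : T.erase s ∈ traces W S := by
  obtain ⟨f, hf, hTf, -⟩ := exists_of_mem_traces_insert hs hT
  exact hTf ▸ filter_mem_traces hf S

theorem card_traces_insert_le [DecidableEq α] {W₀ : Set (α → ℝ)} (hs : s ∉ S)
    (hW₀ : ∀ f ∈ W, ∀ g ∈ W, 0 ≤ f s → g s < 0 → -g s • f + f s • g ∈ W₀) :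
    #(traces W (insert s S)) ≤ #(traces W S) + #(traces W₀ S) := by
  set A := traces W (insert s S)
  set Aout := {T ∈ A | s ∉ T}
  set Ain := {T ∈ A | s ∈ T}.image (·.erase s)
  have hA : #A = #Aout + #Ain := by
    rw [card_image_of_injOn, add_comm, card_filter_add_card_filter_not]
    exact (erase_injOn' s).mono fun T hT => (mem_filter.1 hT).2
  have hunion : Aout ∪ Ain ⊆ traces W S := by
    intro b hb
    rcases mem_union.1 hb with hb | hb
    · obtain ⟨hbA, hsb⟩ := mem_filter.1 hb
      simpa [erase_eq_of_notMem hsb] using erase_mem_traces_of_mem_traces_insert hs hbA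
    · obtain ⟨T, hT, rfl⟩ := mem_image.1 hb
      exact erase_mem_traces_of_mem_traces_insert hs (mem_filter.1 hT).1
  have hinter : Aout ∩ Ain ⊆ traces W₀ S := by
    intro b hb
    obtain ⟨hb, T, hT, rfl⟩ := And.imp_right mem_image.1 (mem_inter.1 hb)
    obtain ⟨hTA, hsT⟩ := mem_filter.1 hT
    obtain ⟨hbA, hsb⟩ := mem_filter.1 hb
    obtain ⟨g, hg, hbg, hgs⟩ := exists_of_mem_traces_insert hs hbA
    obtain ⟨f, hf, hTf, hfs⟩ := exists_of_mem_traces_insert hs hTA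
    rw [erase_eq_of_notMem hsb] at hbg
    have hgs : g s < 0 := not_le.1 (hgs.not.1 hsb)
    have hfs : 0 ≤ f s := hfs.1 hsT
    have hfg : ∀ x ∈ S, 0 ≤ f x ↔ 0 ≤ g x := fun x hx => by
      simpa [hx] using congrArg (x ∈ ·) (hTf.symm.trans hbg)
    refine mem_traces.2 ⟨_, hW₀ f hf g hg hfs hgs, hTf.trans (filter_congr fun x hx => ?_)⟩
    simp only [Pi.add_apply, Pi.smul_apply, smul_eq_mul]
    by_cases hgx : 0 ≤ g x
    · exact iff_of_true ((hfg x hx).2 hgx) (by nlinarith [(hfg x hx).2 hgx])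
    · exact iff_of_false ((hfg x hx).not.2 hgx) (by nlinarith [(hfg x hx).not.2 hgx])
  calc #A = #(Aout ∪ Ain) + #(Aout ∩ Ain) := by rw [hA, card_union_add_card_inter]
    _ ≤ #(traces W S) + #(traces W₀ S) := add_le_add (card_le_card hunion) (card_le_card hinter)

end Traces

section FiniteDimensional

variable (W : Submodule ℝ (α → ℝ)) [FiniteDimensional ℝ W]

theorem card_traces_le_three_of_finrank_le_one (hW : finrank ℝ W ≤ 1) (S : Finset α) :
    #(traces W S) ≤ 3 := by
  classical
  obtain ⟨v, hv⟩ := finrank_le_one_iff.1 hW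
  have hsub : traces W S ⊆ {{x ∈ S | 0 ≤ (v : α → ℝ) x}, {x ∈ S | 0 ≤ -(v : α → ℝ) x}, S} := by
    intro T hT
    obtain ⟨f, hf, rfl⟩ := mem_traces.1 hT
    obtain ⟨c, hc⟩ := hv ⟨f, hf⟩
    obtain rfl : c • (v : α → ℝ) = f := congrArg Subtype.val hc
    simp only [Pi.smul_apply, smul_eq_mul, mem_insert, mem_singleton]
    rcases lt_trichotomy c 0 with hc | rfl | hc
    · refine .inr (.inl (filter_congr fun x _ => ?_))
      rw [← neg_mul_neg, mul_nonneg_iff_of_pos_left (neg_pos.2 hc)]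
    · simp
    · exact .inl (filter_congr fun x _ => mul_nonneg_iff_of_pos_left hc)
  exact (card_le_card hsub).trans card_le_three

theorem exists_card_traces_insert_le [DecidableEq α] {d : ℕ} (hW : finrank ℝ W ≤ d + 1)
    {S : Finset α} {s : α} (hs : s ∉ S) :
    ∃ W₀ ≤ W, finrank ℝ W₀ ≤ d ∧ #(traces W (insert s S)) ≤ #(traces W S) + #(traces W₀ S) := by
  by_cases hneg : ∃ g ∈ W, g s < 0
  · obtain ⟨g, hgW, hgs⟩ := hneg
    set W₀ := W ⊓ LinearMap.ker (LinearMap.proj (R := ℝ) (φ := fun _ : α => ℝ) s)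
    have hlt : W₀ < W := inf_lt_left.2 fun h => hgs.ne (h hgW)
    refine ⟨W₀, hlt.le, by have := Submodule.finrank_lt_finrank_of_lt hlt; omega,
      card_traces_insert_le hs fun f hf g hg _ _ => ⟨?_, ?_⟩⟩
    · exact W.add_mem (W.smul_mem _ hf) (W.smul_mem _ hg)
    · simp [mul_comm]
  · push Not at hneg
    refine ⟨⊥, bot_le, by simp, card_traces_insert_le hs fun f _ g hg _ hgs => ?_⟩
    exact absurd (hneg g hg) hgs.not_ge

theorem card_traces_le_of_finrank_le (d : ℕ) (hW : finrank ℝ W ≤ d + 1) (S : Finset α) :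
    #(traces W S) ≤ 3 * (#S + 1) ^ d := by
  classical
  induction d generalizing W S with
  | zero => simpa using card_traces_le_three_of_finrank_le_one W hW S
  | succ d ihd =>
    induction S using Finset.induction_on with
    | empty => simpa using (card_traces_empty_le_one (W : Set (α → ℝ))).trans (by norm_num)
    | insert s S hs ihS =>
      obtain ⟨W₀, hW₀W, hW₀, hcard⟩ := exists_card_traces_insert_le W hW hs
      have := Submodule.finiteDimensional_of_le hW₀W
      have hpow : (#S + 1) ^ (d + 1) + (#S + 1) ^ d ≤ (#S + 1 + 1) ^ (d + 1) := by
        rw [pow_succ, pow_succ, ← mul_add_one]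
        gcongr
        omega
      rw [card_insert_of_notMem hs]
      linarith [ihd W₀ hW₀ S]

theorem card_traces_le_two_mul_pow {p : ℕ} (hp : 2 ≤ p) (hW : finrank ℝ W ≤ p + 1)
    (S : Finset α) : #(traces W S) ≤ 2 * (#S + 1) ^ p := by
  classical
  obtain ⟨q, rfl⟩ := Nat.exists_eq_add_of_le' hp
  induction S using Finset.induction_on with
  | empty => simpa using (card_traces_empty_le_one (W : Set (α → ℝ))).trans (by norm_num)
  | insert s S hs ihS =>
    obtain ⟨W₀, hW₀W, hW₀, hcard⟩ := exists_card_traces_insert_le W hW hs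
    have := Submodule.finiteDimensional_of_le hW₀W
    have hpow (m : ℕ) : 2 * m ^ (q + 2) + 3 * m ^ (q + 1) ≤ 2 * (m + 1) ^ (q + 2) :=
      calc 2 * m ^ (q + 2) + 3 * m ^ (q + 1) ≤ 2 * (m ^ q * (m + 1) ^ 2) := by
            ring_nf; linarith [Nat.zero_le (m ^ q * m), Nat.zero_le (m ^ q)]
        _ ≤ 2 * ((m + 1) ^ q * (m + 1) ^ 2) := by gcongr; omega
        _ = 2 * (m + 1) ^ (q + 2) := by ring
    rw [card_insert_of_notMem hs]
    linarith [card_traces_le_of_finrank_le W₀ (q + 1) hW₀ S, hpow (#S + 1)]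

end FiniteDimensional

section Chains

theorem card_le_card_add_one_of_isChain {𝒜 : Finset (Finset α)} {S : Finset α}
    (h𝒜 : IsChain (· ⊆ ·) (𝒜 : Set (Finset α))) (hS : ∀ T ∈ 𝒜, T ⊆ S) : #𝒜 ≤ #S + 1 := by
  simpa using card_le_card_of_injOn card (t := range (#S + 1))
    (fun T hT => mem_range.2 (Nat.lt_succ_of_le (card_le_card (hS T hT))))
    fun T hT T' hT' hTT' => (h𝒜.total hT hT').elim
      (fun h => eq_of_subset_of_card_le h hTT'.ge) fun h => (eq_of_subset_of_card_le h hTT'.le).symm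

theorem isChain_traces_monotone_comp (g : α → ℝ) (S : Finset α) :
    IsChain (· ⊆ ·) (traces {f | ∃ φ : ℝ → ℝ, Monotone φ ∧ f = φ ∘ g} S : Set (Finset α)) := by
  intro T hT T' hT' _
  obtain ⟨_, ⟨φ, hφ, rfl⟩, rfl⟩ := mem_traces.1 hT
  obtain ⟨_, ⟨ψ, hψ, rfl⟩, rfl⟩ := mem_traces.1 hT'
  by_contra! h
  obtain ⟨x, hx, hx'⟩ := not_subset.1 h.1
  obtain ⟨y, hy', hy⟩ := not_subset.1 h.2
  simp only [mem_filter, Function.comp_apply, not_and, not_le] at hx hx' hy hy'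
  rcases le_total (g x) (g y) with hxy | hyx
  · exact (hφ hxy).not_gt ((hy hy'.1).trans_le hx.2)
  · exact (hψ hyx).not_gt ((hx' hx.1).trans_le hy'.2)

theorem card_traces_le_of_forall_monotone_or_antitone {W : Set (α → ℝ)} (g : α → ℝ)
    (hW : ∀ f ∈ W, ∃ φ : ℝ → ℝ, (Monotone φ ∨ Antitone φ) ∧ f = φ ∘ g) (S : Finset α) :
    #(traces W S) ≤ 2 * (#S + 1) := by
  classical
  set M : (α → ℝ) → Set (α → ℝ) := fun h => {f | ∃ φ : ℝ → ℝ, Monotone φ ∧ f = φ ∘ h}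
  have hchain (h : α → ℝ) : #(traces (M h) S) ≤ #S + 1 :=
    card_le_card_add_one_of_isChain (isChain_traces_monotone_comp h S) fun T hT =>
      mem_powerset.1 (traces_subset_powerset _ S hT)
  have hsub : traces W S ⊆ traces (M g) S ∪ traces (M (-g)) S := by
    intro T hT
    obtain ⟨f, hf, rfl⟩ := mem_traces.1 hT
    obtain ⟨φ, hφ | hφ, rfl⟩ := hW f hf
    · exact mem_union_left _ (filter_mem_traces (W := M g) ⟨φ, hφ, rfl⟩ S)
    · have hφneg : Monotone (φ ∘ Neg.neg) := hφ.comp fun _ _ => neg_le_neg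
      refine mem_union_right _ (filter_mem_traces (W := M (-g)) ⟨_, hφneg, ?_⟩ S)
      ext; simp
  calc #(traces W S) ≤ (#S + 1) + (#S + 1) :=
        (card_le_card hsub).trans ((card_union_le _ _).trans (add_le_add (hchain g) (hchain (-g))))
    _ = 2 * (#S + 1) := by ring

end Chains

section Affine

variable (E : Type*) [NormedAddCommGroup E] [InnerProductSpace ℝ E]

noncomputable def affineFunctions : Submodule ℝ (E → ℝ) :=
  LinearMap.range
    (LinearMap.pi fun x => (innerₗ E).flip x ∘ₗ LinearMap.fst ℝ E ℝ + LinearMap.snd ℝ E ℝ)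

instance [FiniteDimensional ℝ E] : FiniteDimensional ℝ (affineFunctions E) :=
  LinearMap.finiteDimensional_range _

variable {E}

theorem mem_affineFunctions {f : E → ℝ} :
    f ∈ affineFunctions E ↔ ∃ (a : E) (b : ℝ), f = fun x => inner ℝ a x + b := by
  simp [affineFunctions, funext_iff, eq_comm, real_inner_comm]

theorem finrank_affineFunctions_le [FiniteDimensional ℝ E] :
    finrank ℝ (affineFunctions E) ≤ finrank ℝ E + 1 :=
  (LinearMap.finrank_range_le _).trans (by simp)

theorem card_traces_affineFunctions_le {p : ℕ} (hp : 1 ≤ p)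
    (S : Finset (EuclideanSpace ℝ (Fin p))) :
    #(traces (affineFunctions (EuclideanSpace ℝ (Fin p))) S) ≤ 2 * (#S + 1) ^ p := by
  obtain rfl | hp₂ := hp.eq_or_lt
  · refine (card_traces_le_of_forall_monotone_or_antitone (fun x => x 0) (fun f hf => ?_) S).trans
      (by simp)
    obtain ⟨a, b, rfl⟩ := mem_affineFunctions.1 hf
    refine ⟨fun t => a 0 * t + b, ?_, funext fun x => by simp [PiLp.inner_apply, mul_comm]⟩
    rcases le_total 0 (a 0) with ha | ha
    · exact .inl ((monotone_id.const_mul ha).add_const b)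
    · exact .inr ((monotone_id.const_mul_of_nonpos ha).add_const b)
  · exact card_traces_le_two_mul_pow _ hp₂ (finrank_affineFunctions_le.trans (by simp)) S

end Affine

theorem ncard_le_card_traces_pow {ι : Type*} [Fintype ι] [DecidableEq ι] {W : Set (α → ℝ)}
    {S : Finset α} {𝒞 : Set (Set α)}
    (h𝒞 : ∀ T ∈ 𝒞, ∃ f : ι → α → ℝ, (∀ j, f j ∈ W) ∧ T = ↑S ∩ ⋂ j, {x | 0 ≤ f j x}) :
    𝒞.ncard ≤ #(traces W S) ^ Fintype.card ι := by
  set P := Fintype.piFinset fun _ : ι => traces W S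
  have h𝒞P : 𝒞 ⊆ (fun u : ι → Finset α => ↑S ∩ ⋂ j, (u j : Set α)) '' P := by
    intro T hT
    obtain ⟨f, hf, rfl⟩ := h𝒞 T hT
    refine ⟨fun j => {x ∈ S | 0 ≤ f j x},
      Fintype.mem_piFinset.2 fun j => filter_mem_traces (hf j) S, ?_⟩
    ext x
    simp +contextual
  calc 𝒞.ncard ≤ _ := Set.ncard_le_ncard h𝒞P (P.finite_toSet.image _)
    _ ≤ #P := (Set.ncard_image_le P.finite_toSet).trans (Set.ncard_coe_finset P).le
    _ = #(traces W S) ^ Fintype.card ι := by simp [P]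

theorem halfspace_intersection_trace_bound_general (p n : ℕ) (hp : 1 ≤ p)
    (S : Finset (EuclideanSpace ℝ (Fin p))) (hS : S.card = n) (k : ℕ) :
    Set.ncard {T : Set (EuclideanSpace ℝ (Fin p)) |
        ∃ (a : Fin k → EuclideanSpace ℝ (Fin p)) (b : Fin k → ℝ),
          T = ↑S ∩ ⋂ j, {x : EuclideanSpace ℝ (Fin p) | 0 ≤ (inner ℝ (a j) x : ℝ) + b j}} ≤
      (2 * (n + 1) ^ p) ^ k := by
  subst hS
  calc _ ≤ #(traces (affineFunctions (EuclideanSpace ℝ (Fin p))) S) ^ Fintype.card (Fin k) :=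
        ncard_le_card_traces_pow <| by
          rintro T ⟨a, b, rfl⟩
          exact ⟨_, fun j => mem_affineFunctions.2 ⟨a j, b j, rfl⟩, rfl⟩
    _ ≤ (2 * (#S + 1) ^ p) ^ k := by
        rw [Fintype.card_fin]
        exact Nat.pow_le_pow_left (card_traces_affineFunctions_le hp S) k

/-- For a finite set `S` of `n ≥ 1` points in `ℝ^p` (`p ≥ 1`) and every `k ≥ 1`, the number
of distinct subsets of `S` expressible as an intersection of `S` with `k` affine halfspaces
`{x : ⟨aⱼ, x⟩ + bⱼ ≥ 0}` is at most `(2(n+1)^p)^k`. -/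
theorem halfspace_intersection_trace_bound (p n : ℕ) (hp : 1 ≤ p) (hn : 1 ≤ n)
    (S : Finset (EuclideanSpace ℝ (Fin p))) (hS : S.card = n) (k : ℕ) (hk : 1 ≤ k) :
    Set.ncard {T : Set (EuclideanSpace ℝ (Fin p)) |
        ∃ (a : Fin k → EuclideanSpace ℝ (Fin p)) (b : Fin k → ℝ),
          T = ↑S ∩ ⋂ j, {x : EuclideanSpace ℝ (Fin p) | 0 ≤ (inner ℝ (a j) x : ℝ) + b j}} ≤
      (2 * (n + 1) ^ p) ^ k :=
  halfspace_intersection_trace_bound_general p n hp S hS k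
end
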